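/- arXiv:1408.4501 — 7 statements merged into one kernel-verified Lean document; each statement's English description precedes it below -/
import Mathlib

section
/- Let $h: (X_A,\sigma_A) \to (X_B,\sigma_B)$ and $g: (X_B,\sigma_B) \to (X_C,\sigma_C)$ be continuous orbit maps, with $\sigma_B^{k_1(x)}(h(\sigma_A(x))) = \sigma_B^{l_1(x)}(h(x))$ and $\sigma_C^{k_2(y)}(g(\sigma_B(y))) = \sigma_C^{l_2(y)}(g(y))$. Define $k_3(x) = k_2^{l_1(x)}(h(x)) + l_2^{k_1(x)}(h(\sigma_A(x)))$ and $l_3(x) = l_2^{l_1(x)}(h(x)) + k_2^{k_1(x)}(h(\sigma_A(x)))$, where $k_2^n$, $l_2^n$ are the ergodic sums of $k_2$, $l_2$ along $\sigma_B$. Then $\sigma_C^{k_3(x)}(g(h(\sigma_A(x)))) = \sigma_C^{l_3(x)}(g(h(x)))$ for all $x \in X_A$; hence $g \circ h : X_A \to X_C$ is a continuous orbit map. -/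
open Function Finset

/-- The one-sided topological Markov shift space of a `{0,1}`-matrix `A`. -/
abbrev MarkovShift {N : ℕ} (A : Matrix (Fin N) (Fin N) (Fin 2)) :=
  {x : ℕ → Fin N // ∀ n : ℕ, A (x n) (x (n + 1)) = 1}

/-- The shift map `σ_A` on the one-sided Markov shift. -/
def mshift {N : ℕ} (A : Matrix (Fin N) (Fin N) (Fin 2)) :
    MarkovShift A → MarkovShift A :=
  fun x => ⟨fun n => x.1 (n + 1), fun n => x.2 (n + 1)⟩

/-- Ergodic sums `f^n(x) = ∑_{i<n} f(σ^i x)`. -/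
def esum {X : Type*} (σ : X → X) (f : X → ℕ) (n : ℕ) (x : X) : ℕ :=
  ∑ i ∈ Finset.range n, f (σ^[i] x)

/-!
Iterating the cocycle identity of `g` along the `σ_B`-orbit of a point `y` gives
`σ_C^{k₂ⁿ(y)} (g (σ_Bⁿ y)) = σ_C^{l₂ⁿ(y)} (g y)`. Applied with `n = k₁(x)` at `h (σ_A x)` and
with `n = l₁(x)` at `h x`, both sides meet at the common point
`σ_B^{k₁(x)} (h (σ_A x)) = σ_B^{l₁(x)} (h x)`; since all powers of `σ_C` commute, the two
identities combine into the one for `g ∘ h`. Continuity of `k₃, l₃` holds because an ergodic sum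
with a locally constant number of terms is locally a finite sum of continuous functions.
-/

theorem continuous_uncurry_of_discreteTopology {I X Z : Type*} [TopologicalSpace I]
    [DiscreteTopology I] [TopologicalSpace X] [TopologicalSpace Z] {F : I → X → Z}
    (hF : ∀ i, Continuous (F i)) : Continuous (uncurry F) := by
  refine continuous_iff_continuousAt.2 fun p => ?_
  have hfst : ∀ᶠ q in nhds p, q.1 = p.1 :=
    ((isOpen_discrete {p.1}).preimage continuous_fst).mem_nhds rfl
  refine ((hF p.1).comp continuous_snd).continuousAt.congr ?_
  filter_upwards [hfst] with q hq
  simp only [comp_apply, uncurry, hq]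

theorem continuous_mshift {N : ℕ} (A : Matrix (Fin N) (Fin N) (Fin 2)) :
    Continuous (mshift A) :=
  .subtype_mk (continuous_pi fun n => (continuous_apply (n + 1)).comp continuous_subtype_val)
    (fun x : MarkovShift A => fun n => x.2 (n + 1))

section Esum

variable {X : Type*} {σ : X → X}

theorem esum_succ (f : X → ℕ) (n : ℕ) (x : X) :
    esum σ f (n + 1) x = esum σ f n x + f (σ^[n] x) :=
  sum_range_succ _ _

theorem continuous_esum [TopologicalSpace X] (hσ : Continuous σ) {f : X → ℕ}
    (hf : Continuous f) (n : ℕ) : Continuous (esum σ f n) :=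
  continuous_finsetSum _ fun i _ => hf.comp (hσ.iterate i)

theorem Continuous.esum [TopologicalSpace X] {Y : Type*} [TopologicalSpace Y]
    (hσ : Continuous σ) {f : X → ℕ} (hf : Continuous f) {m : Y → ℕ} (hm : Continuous m)
    {u : Y → X} (hu : Continuous u) : Continuous fun y => esum σ f (m y) (u y) :=
  (continuous_uncurry_of_discreteTopology (continuous_esum hσ hf)).comp (hm.prodMk hu)

variable {Z : Type*} {τ : Z → Z} {g : X → Z} {k l : X → ℕ}

theorem iterate_esum_cocycle (horb : ∀ y, τ^[k y] (g (σ y)) = τ^[l y] (g y)) (n : ℕ) (y : X) :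
    τ^[esum σ k n y] (g (σ^[n] y)) = τ^[esum σ l n y] (g y) := by
  induction n with
  | zero => simp [esum]
  | succ n ih =>
    calc τ^[esum σ k (n + 1) y] (g (σ^[n + 1] y))
        = τ^[esum σ k n y] (τ^[k (σ^[n] y)] (g (σ (σ^[n] y)))) := by
          rw [esum_succ, iterate_add_apply, iterate_succ_apply']
      _ = τ^[l (σ^[n] y)] (τ^[esum σ k n y] (g (σ^[n] y))) := by
          rw [horb]; exact Commute.iterate_iterate_self τ _ _ _
      _ = τ^[esum σ l (n + 1) y] (g y) := by
          rw [ih, esum_succ, add_comm, iterate_add_apply]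

end Esum

theorem iterate_esum_cocycle_comp {X Y Z : Type*} {σ : X → X} {τ : Y → Y} {ρ : Z → Z}
    {h : X → Y} {g : Y → Z} {k₁ l₁ : X → ℕ} {k₂ l₂ : Y → ℕ}
    (horb₁ : ∀ x, τ^[k₁ x] (h (σ x)) = τ^[l₁ x] (h x))
    (horb₂ : ∀ y, ρ^[k₂ y] (g (τ y)) = ρ^[l₂ y] (g y)) (x : X) :
    ρ^[esum τ k₂ (l₁ x) (h x) + esum τ l₂ (k₁ x) (h (σ x))] (g (h (σ x)))
      = ρ^[esum τ l₂ (l₁ x) (h x) + esum τ k₂ (k₁ x) (h (σ x))] (g (h x)) := by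
  have hσx := iterate_esum_cocycle horb₂ (k₁ x) (h (σ x))
  have hx := iterate_esum_cocycle horb₂ (l₁ x) (h x)
  rw [horb₁] at hσx
  rw [iterate_add_apply, ← hσx, add_comm, iterate_add_apply, ← hx]
  exact Commute.iterate_iterate_self ρ _ _ _

/-- the composition of two continuous orbit maps is a continuous orbit
map, with cocycle data `k_3, l_3` given by the stated ergodic sums. -/
theorem comp_continuousOrbitMap {N M P : ℕ}
    (A : Matrix (Fin N) (Fin N) (Fin 2)) (B : Matrix (Fin M) (Fin M) (Fin 2))
    (C : Matrix (Fin P) (Fin P) (Fin 2))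
    (h : MarkovShift A → MarkovShift B) (hlh : IsLocalHomeomorph h)
    (g : MarkovShift B → MarkovShift C) (hlg : IsLocalHomeomorph g)
    (k1 l1 : MarkovShift A → ℕ) (hk1 : Continuous k1) (hl1 : Continuous l1)
    (k2 l2 : MarkovShift B → ℕ) (hk2 : Continuous k2) (hl2 : Continuous l2)
    (horb1 : ∀ x, (mshift B)^[k1 x] (h (mshift A x)) = (mshift B)^[l1 x] (h x))
    (horb2 : ∀ y, (mshift C)^[k2 y] (g (mshift B y)) = (mshift C)^[l2 y] (g y)) :
    (∀ x : MarkovShift A,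
      (mshift C)^[esum (mshift B) k2 (l1 x) (h x) +
          esum (mshift B) l2 (k1 x) (h (mshift A x))] (g (h (mshift A x)))
        = (mshift C)^[esum (mshift B) l2 (l1 x) (h x) +
            esum (mshift B) k2 (k1 x) (h (mshift A x))] (g (h x))) ∧
    IsLocalHomeomorph (g ∘ h) ∧
    Continuous (fun x : MarkovShift A =>
      esum (mshift B) k2 (l1 x) (h x) + esum (mshift B) l2 (k1 x) (h (mshift A x))) ∧
    Continuous (fun x : MarkovShift A =>
      esum (mshift B) l2 (l1 x) (h x) + esum (mshift B) k2 (k1 x) (h (mshift A x))) := by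
  have hB := continuous_mshift B
  have hh := hlh.continuous
  have hhA : Continuous fun x => h (mshift A x) := hh.comp (continuous_mshift A)
  refine ⟨iterate_esum_cocycle_comp horb1 horb2, hlg.comp hlh, ?_, ?_⟩
  · exact (hB.esum hk2 hl1 hh).add (hB.esum hl2 hk1 hhA)
  · exact (hB.esum hl2 hl1 hh).add (hB.esum hk2 hk1 hhA)
end

section
/- Let $h: X_A \to X_B$ be a continuous orbit map (a local homeomorphism with continuous $k_1, l_1$ satisfying $\sigma_B^{k_1(x)}(h(\sigma_A(x))) = \sigma_B^{l_1(x)}(h(x))$). Suppose $X_B$ has a dense set of points which are not eventually periodic (in the sense that for every nonempty open set the non-eventually-periodic points are dense in it). Then the cocycle function $c_1(x) = l_1(x) - k_1(x)$ does not depend on the choice of $k_1, l_1$: if $k_1', l_1'$ also satisfy the orbit equation for $h$, then $l_1(x) - k_1(x) = l_1'(x) - k_1'(x)$ for all $x \in X_A$. -/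
/-!
Composing the two orbit equations for `x` gives `σ_B^{k₁' + l₁}(h x) = σ_B^{k₁ + l₁'}(h x)`, so the
exponents agree whenever `h x` is not eventually periodic. Since `h` is open, such `x` are dense
in `X_A`, and two continuous `ℕ`-valued functions agreeing on a dense set agree everywhere.
-/

open Function Finset

def nonEventuallyPeriodicPts {Y : Type*} (σ : Y → Y) : Set Y :=
  {y | ¬ ∃ r s : ℕ, r ≠ s ∧ σ^[r] y = σ^[s] y}

theorem eq_of_iterate_eq_of_mem_nonEventuallyPeriodicPts {Y : Type*} {σ : Y → Y} {y : Y}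
    (hy : y ∈ nonEventuallyPeriodicPts σ) {r s : ℕ} (h : σ^[r] y = σ^[s] y) : r = s := by
  by_contra hne
  exact hy ⟨r, s, hne, h⟩

theorem Function.iterate_add_eq_of_iterate_eq {Y : Type*} {σ : Y → Y} {a b : Y} {k l k' l' : ℕ}
    (h : σ^[k] a = σ^[l] b) (h' : σ^[k'] a = σ^[l'] b) : σ^[k' + l] b = σ^[k + l'] b := by
  rw [iterate_add_apply, ← h, ← iterate_add_apply, add_comm, iterate_add_apply, h',
    ← iterate_add_apply]

theorem add_eq_add_of_iterate_eq {X Y : Type*} [TopologicalSpace X] [TopologicalSpace Y]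
    {σ : Y → Y} (hdense : Dense (nonEventuallyPeriodicPts σ)) {f g : X → Y} (hf : IsOpenMap f)
    {k l k' l' : X → ℕ} (hk : Continuous k) (hl : Continuous l)
    (hk' : Continuous k') (hl' : Continuous l')
    (horb : ∀ x, σ^[k x] (g x) = σ^[l x] (f x)) (horb' : ∀ x, σ^[k' x] (g x) = σ^[l' x] (f x)) :
    k' + l = k + l' :=
  (hk'.add hl).ext_on (hdense.preimage hf) (hk.add hl') fun x hx =>
    eq_of_iterate_eq_of_mem_nonEventuallyPeriodicPts hx
      (iterate_add_eq_of_iterate_eq (horb x) (horb' x))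

/-- the cocycle function `c_1 = l_1 - k_1` of a continuous orbit map does
not depend on the choice of `k_1, l_1`, provided the non-eventually-periodic points
are dense in `X_B` (a consequence of condition (I)). -/
theorem cocycle_function_well_defined {N M : ℕ}
    (A : Matrix (Fin N) (Fin N) (Fin 2)) (B : Matrix (Fin M) (Fin M) (Fin 2))
    (hdense : Dense {y : MarkovShift B |
      ¬ ∃ r s : ℕ, r ≠ s ∧ (mshift B)^[r] y = (mshift B)^[s] y})
    (h : MarkovShift A → MarkovShift B) (hlh : IsLocalHomeomorph h)
    (k1 l1 : MarkovShift A → ℕ) (hk1 : Continuous k1) (hl1 : Continuous l1)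
    (horb : ∀ x, (mshift B)^[k1 x] (h (mshift A x)) = (mshift B)^[l1 x] (h x))
    (k1' l1' : MarkovShift A → ℕ) (hk1' : Continuous k1') (hl1' : Continuous l1')
    (horb' : ∀ x, (mshift B)^[k1' x] (h (mshift A x)) = (mshift B)^[l1' x] (h x)) :
    ∀ x : MarkovShift A, (l1 x : ℤ) - (k1 x : ℤ) = (l1' x : ℤ) - (k1' x : ℤ) := by
  intro x
  have hsum := congrFun
    (add_eq_add_of_iterate_eq hdense hlh.isOpenMap hk1 hl1 hk1' hl1' horb horb') x
  simp only [Pi.add_apply] at hsum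
  omega
end

section
/- Let $h: X_A \to X_B$ be a continuous orbit map with functions $k_1, l_1$, and let $\Psi_h : C(X_B,\mathbb{Z}) \to C(X_A,\mathbb{Z})$ be given by $\Psi_h(f)(x) = \sum_{i=0}^{l_1(x)-1} f(\sigma_B^i(h(x))) - \sum_{j=0}^{k_1(x)-1} f(\sigma_B^j(h(\sigma_A(x))))$. Then for every $f \in C(X_B,\mathbb{Z})$: $\Psi_h(f - f \circ \sigma_B) = f \circ h - f \circ h \circ \sigma_A$. In particular $\Psi_h$ maps the coboundary subgroup $\{\xi - \xi\circ\sigma_B\}$ into the coboundary subgroup $\{\xi - \xi\circ\sigma_A\}$. -/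
open Function Finset

/-- The map `Ψ_h(f)(x) = ∑_{i<l(x)} f(σ_Y^i(h x)) - ∑_{j<k(x)} f(σ_Y^j(h(σ_X x)))`
induced by a continuous orbit map `h` with data `(k, l)`. -/
def cocycleSum {X Y : Type*} (σX : X → X) (σY : Y → Y) (h : X → Y)
    (k l : X → ℕ) (f : Y → ℤ) (x : X) : ℤ :=
  (∑ i ∈ Finset.range (l x), f (σY^[i] (h x))) -
    ∑ j ∈ Finset.range (k x), f (σY^[j] (h (σX x)))

theorem sum_range_sub_comp_iterate {Y G : Type*} [AddCommGroup G] (σ : Y → Y) (f : Y → G)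
    (y : Y) (n : ℕ) :
    ∑ i ∈ range n, (f (σ^[i] y) - f (σ (σ^[i] y))) = f y - f (σ^[n] y) := by
  simpa only [iterate_succ_apply', iterate_zero_apply] using sum_range_sub' (fun i => f (σ^[i] y)) n

/-- The orbit equation makes both sums in `Ψ_h` telescope to the same endpoint
`σ_Y^[l x] (h x) = σ_Y^[k x] (h (σ_X x))`, which then cancels. -/
theorem cocycleSum_sub_comp_apply {X Y : Type*} (σX : X → X) (σY : Y → Y) (h : X → Y)
    (k l : X → ℕ) (horb : ∀ x, σY^[k x] (h (σX x)) = σY^[l x] (h x)) (f : Y → ℤ) (x : X) :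
    cocycleSum σX σY h k l (fun y => f y - f (σY y)) x = f (h x) - f (h (σX x)) := by
  rw [cocycleSum, sum_range_sub_comp_iterate, sum_range_sub_comp_iterate, horb x]
  ring

theorem cocycleSum_coboundary_general {N M : ℕ}
    (A : Matrix (Fin N) (Fin N) (Fin 2)) (B : Matrix (Fin M) (Fin M) (Fin 2))
    (h : MarkovShift A → MarkovShift B) (hlh : IsLocalHomeomorph h)
    (k1 l1 : MarkovShift A → ℕ)
    (horb : ∀ x, (mshift B)^[k1 x] (h (mshift A x)) = (mshift B)^[l1 x] (h x)) :
    (∀ (f : MarkovShift B → ℤ), Continuous f →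
      ∀ x : MarkovShift A,
        cocycleSum (mshift A) (mshift B) h k1 l1 (fun y => f y - f (mshift B y)) x
          = f (h x) - f (h (mshift A x))) ∧
    (∀ (ξ : MarkovShift B → ℤ), Continuous ξ →
      ∃ η : MarkovShift A → ℤ, Continuous η ∧
        ∀ x : MarkovShift A,
          cocycleSum (mshift A) (mshift B) h k1 l1 (fun y => ξ y - ξ (mshift B y)) x
            = η x - η (mshift A x)) := by
  exact ⟨fun f _ => cocycleSum_sub_comp_apply _ _ h k1 l1 horb f,
    fun ξ hξ => ⟨ξ ∘ h, hξ.comp hlh.continuous, cocycleSum_sub_comp_apply _ _ h k1 l1 horb ξ⟩⟩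

/-- `Ψ_h(f - f∘σ_B) = f∘h - f∘h∘σ_A`, and in particular `Ψ_h` maps the
coboundary subgroup of `σ_B` into the coboundary subgroup of `σ_A`. -/
theorem cocycleSum_coboundary {N M : ℕ}
    (A : Matrix (Fin N) (Fin N) (Fin 2)) (B : Matrix (Fin M) (Fin M) (Fin 2))
    (h : MarkovShift A → MarkovShift B) (hlh : IsLocalHomeomorph h)
    (k1 l1 : MarkovShift A → ℕ) (hk1 : Continuous k1) (hl1 : Continuous l1)
    (horb : ∀ x, (mshift B)^[k1 x] (h (mshift A x)) = (mshift B)^[l1 x] (h x)) :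
    (∀ (f : MarkovShift B → ℤ), Continuous f →
      ∀ x : MarkovShift A,
        cocycleSum (mshift A) (mshift B) h k1 l1 (fun y => f y - f (mshift B y)) x
          = f (h x) - f (h (mshift A x))) ∧
    (∀ (ξ : MarkovShift B → ℤ), Continuous ξ →
      ∃ η : MarkovShift A → ℤ, Continuous η ∧
        ∀ x : MarkovShift A,
          cocycleSum (mshift A) (mshift B) h k1 l1 (fun y => ξ y - ξ (mshift B y)) x
            = η x - η (mshift A x)) :=
  cocycleSum_coboundary_general A B h hlh k1 l1 horb
end

section
/- Suppose $h: X_A \to X_B$ is a homeomorphism giving a continuous orbit equivalence, with data $(k_1,l_1)$ for $h$ and $(k_2,l_2)$ for $h^{-1}$, and set $c_1 = l_1 - k_1$, $c_2 = l_2 - k_2$. Then the following are equivalent: (i) $[c_1] = [1_A]$ in $H^A = C(X_A,\mathbb{Z})/\mathrm{cobdy}(\sigma_A)$; (ii) $[c_2] = [1_B]$ in $H^B$. (Either condition defines strongly continuous orbit equivalence.) -/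
open Function Finset

/-!
Let `y` have an infinite `τ`-orbit, and put `x = h⁻¹ y`, `x' = h⁻¹ (τ y)`, so that
`σ^{k₂ y} x' = σ^{l₂ y} x`. Iterating the orbit relation of `h` along the two `σ`-orbits shows
that `τ^{K' + L} y = τ^{K + L' + 1} y`, where `K, L` (resp. `K', L'`) are the ergodic sums of
`k₁, l₁` of length `l₂ y` at `x` (resp. of length `k₂ y` at `x'`). Since the orbit of `y` is
infinite, the exponents agree. If `l₁ - k₁ = 1 + b - b ∘ σ`, the ergodic sums telescope, and the
equality of exponents becomes `l₂ y - k₂ y = 1 + b₂ y - b₂ (τ y)` with `b₂ = -b ∘ h⁻¹`. Such `y`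
are dense, so this identity of continuous integer-valued functions holds everywhere; by symmetry
the converse follows.
-/

section CocycleIdentity

variable {X Y : Type*} {σ : X → X} {τ : Y → Y}

theorem iterate_esum_of_orbit_eq (f : X → Y) (k l : X → ℕ)
    (horb : ∀ x, τ^[k x] (f (σ x)) = τ^[l x] (f x)) (n : ℕ) (x : X) :
    τ^[esum σ k n x] (f (σ^[n] x)) = τ^[esum σ l n x] (f x) := by
  induction n with
  | zero => simp [esum]
  | succ n ih =>
    simp only [esum, sum_range_succ] at ih ⊢
    calc τ^[∑ i ∈ range n, k (σ^[i] x) + k (σ^[n] x)] (f (σ^[n + 1] x))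
        = τ^[∑ i ∈ range n, k (σ^[i] x)] (τ^[l (σ^[n] x)] (f (σ^[n] x))) := by
          rw [iterate_add_apply, iterate_succ_apply', horb]
      _ = τ^[∑ i ∈ range n, l (σ^[i] x) + l (σ^[n] x)] (f x) := by
          rw [← iterate_add_apply, add_comm, iterate_add_apply, ih, ← iterate_add_apply,
            add_comm]

theorem esum_sub_esum_of_sub_eq_one_add_coboundary (k l : X → ℕ) (b : X → ℤ)
    (hb : ∀ x, (l x : ℤ) - k x = 1 + b x - b (σ x)) (n : ℕ) (x : X) :
    (esum σ l n x : ℤ) - esum σ k n x = n + b x - b (σ^[n] x) := by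
  have telescope := sum_range_sub' (fun i => b (σ^[i] x)) n
  simp only [iterate_succ_apply'] at telescope
  simp only [esum, Nat.cast_sum, ← sum_sub_distrib, hb, add_sub_assoc, sum_add_distrib,
    telescope, sum_const, card_range, nsmul_one, iterate_zero_apply]

/-- The pointwise identity at a point with an infinite orbit; `f, g` play the roles of `h, h⁻¹`. -/
theorem sub_eq_one_add_coboundary_of_injective_orbit (f : X → Y) (g : Y → X)
    (hfg : LeftInverse f g) (k₁ l₁ : X → ℕ) (k₂ l₂ : Y → ℕ) (b : X → ℤ)
    (horb₁ : ∀ x, τ^[k₁ x] (f (σ x)) = τ^[l₁ x] (f x))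
    (hb : ∀ x, (l₁ x : ℤ) - k₁ x = 1 + b x - b (σ x))
    {y : Y} (horb₂ : σ^[k₂ y] (g (τ y)) = σ^[l₂ y] (g y))
    (hy : Injective fun n : ℕ => τ^[n] y) :
    (l₂ y : ℤ) - k₂ y = 1 + -b (g y) - -b (g (τ y)) := by
  set x := g y
  set x' := g (τ y)
  set z := f (σ^[l₂ y] x)
  have hz : τ^[esum σ l₁ (l₂ y) x] y = τ^[esum σ k₁ (l₂ y) x] z := by
    rw [iterate_esum_of_orbit_eq f k₁ l₁ horb₁, hfg]
  have hz' : τ^[esum σ l₁ (k₂ y) x' + 1] y = τ^[esum σ k₁ (k₂ y) x'] z := by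
    rw [iterate_succ_apply, ← hfg (τ y), ← iterate_esum_of_orbit_eq f k₁ l₁ horb₁, horb₂]
  have hexp : esum σ k₁ (k₂ y) x' + esum σ l₁ (l₂ y) x
      = esum σ k₁ (l₂ y) x + (esum σ l₁ (k₂ y) x' + 1) := by
    apply hy
    simp only [iterate_add_apply, hz, hz']
    rw [← iterate_add_apply, add_comm, iterate_add_apply]
  have hL := esum_sub_esum_of_sub_eq_one_add_coboundary k₁ l₁ b hb (l₂ y) x
  have hL' := esum_sub_esum_of_sub_eq_one_add_coboundary k₁ l₁ b hb (k₂ y) x'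
  rw [horb₂] at hL'
  have hexpℤ := congrArg (Nat.cast : ℕ → ℤ) hexp
  push_cast at hexpℤ
  linarith

end CocycleIdentity

section Cohomology

variable {X Y : Type*} [TopologicalSpace X] [TopologicalSpace Y] {σ : X → X} {τ : Y → Y}

/-- `[c] = [1]` in `C(X, ℤ) / {b - b ∘ σ}`. -/
def CohomologousToOne (σ : X → X) (c : X → ℤ) : Prop :=
  ∃ b : X → ℤ, Continuous b ∧ ∀ x, c x = 1 + b x - b (σ x)

theorem CohomologousToOne.of_orbit_eq {f : X → Y} {g : Y → X} (hfg : LeftInverse f g)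
    (hg : Continuous g) (hτ : Continuous τ)
    (hdense : Dense {y : Y | ¬ ∃ r s : ℕ, r ≠ s ∧ τ^[r] y = τ^[s] y})
    {k₁ l₁ : X → ℕ} {k₂ l₂ : Y → ℕ} (hk₂ : Continuous k₂) (hl₂ : Continuous l₂)
    (horb₁ : ∀ x, τ^[k₁ x] (f (σ x)) = τ^[l₁ x] (f x))
    (horb₂ : ∀ y, σ^[k₂ y] (g (τ y)) = σ^[l₂ y] (g y))
    (h : CohomologousToOne σ fun x => (l₁ x : ℤ) - k₁ x) :
    CohomologousToOne τ fun y => (l₂ y : ℤ) - k₂ y := by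
  obtain ⟨b, hb, hcob⟩ := h
  have hcob₂ : (fun y => (l₂ y : ℤ) - k₂ y) = fun y => 1 + -b (g y) - -b (g (τ y)) :=
    Continuous.ext_on hdense (by fun_prop) (by fun_prop) fun y hy =>
      sub_eq_one_add_coboundary_of_injective_orbit f g hfg k₁ l₁ k₂ l₂ b horb₁ hcob (horb₂ y)
        fun r s hrs => by_contra fun hne => hy ⟨r, s, hne, hrs⟩
  exact ⟨fun y => -b (g y), (hb.comp hg).neg, congrFun hcob₂⟩

end Cohomology

/-- for a continuous orbit equivalence `h`, the class of the cocycle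
`c_1 = l_1 - k_1` equals `[1_A]` in `H^A` iff the class of `c_2 = l_2 - k_2` equals
`[1_B]` in `H^B` (either condition defines strongly continuous orbit equivalence). -/
theorem scoe_cocycle_iff {N M : ℕ}
    (A : Matrix (Fin N) (Fin N) (Fin 2)) (B : Matrix (Fin M) (Fin M) (Fin 2))
    (hdenseA : Dense {x : MarkovShift A |
      ¬ ∃ r s : ℕ, r ≠ s ∧ (mshift A)^[r] x = (mshift A)^[s] x})
    (hdenseB : Dense {y : MarkovShift B |
      ¬ ∃ r s : ℕ, r ≠ s ∧ (mshift B)^[r] y = (mshift B)^[s] y})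
    (h : MarkovShift A ≃ₜ MarkovShift B)
    (k1 l1 : MarkovShift A → ℕ) (hk1 : Continuous k1) (hl1 : Continuous l1)
    (k2 l2 : MarkovShift B → ℕ) (hk2 : Continuous k2) (hl2 : Continuous l2)
    (horb1 : ∀ x, (mshift B)^[k1 x] (h (mshift A x)) = (mshift B)^[l1 x] (h x))
    (horb2 : ∀ y, (mshift A)^[k2 y] (h.symm (mshift B y)) = (mshift A)^[l2 y] (h.symm y)) :
    (∃ b1 : MarkovShift A → ℤ, Continuous b1 ∧
        ∀ x, (l1 x : ℤ) - (k1 x : ℤ) = 1 + b1 x - b1 (mshift A x)) ↔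
    (∃ b2 : MarkovShift B → ℤ, Continuous b2 ∧
        ∀ y, (l2 y : ℤ) - (k2 y : ℤ) = 1 + b2 y - b2 (mshift B y)) :=
  ⟨CohomologousToOne.of_orbit_eq h.apply_symm_apply h.symm.continuous (continuous_mshift B)
      hdenseB hk2 hl2 horb1 horb2,
    CohomologousToOne.of_orbit_eq h.symm_apply_apply h.continuous (continuous_mshift A)
      hdenseA hk1 hl1 horb2 horb1⟩
end

section
/- Suppose $(X_A,\sigma_A)$ and $(X_B,\sigma_B)$ are strongly continuous orbit equivalent via $h$, with data $k_1,l_1,b_1$ on $X_A$ and $k_2,l_2,b_2$ on $X_B$, and $X_A$ is a topologically transitive compact Markov shift (so that every continuous $\sigma_A$-invariant integer-valued function is constant). Then there exists $N_h \in \mathbb{N}$ such that $b_1(x) + b_2(h(x)) = N_h$ for all $x \in X_A$. -/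
/-!
The cocycle identity `l₂ - k₂ = 1 + b₂ - b₂ ∘ σ_B` telescopes along ergodic sums:
`l₂^n(y) - k₂^n(y) = n + b₂(y) - b₂(σ_B^n y)`. Feeding this into Lemma 3.3 of Matsumoto–Matui at
the two points `h x` and `h (σ_A x)`, whose orbits meet after `l₁(x)` resp. `k₁(x)` steps, gives
`l₁(x) - k₁(x) = 1 + b₂(h(σ_A x)) - b₂(h x)`; comparing with the cocycle identity for `b₁` shows
that `b₁ + b₂ ∘ h` is a continuous `σ_A`-invariant function, hence constant.
-/

open Function Finset

theorem esum_sub_esum_of_cocycle {X : Type*} {σ : X → X} {k l b : X → ℕ}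
    (hcoc : ∀ y, (l y : ℤ) - k y = 1 + b y - b (σ y)) (n : ℕ) (y : X) :
    (esum σ l n y : ℤ) - esum σ k n y = n + b y - b (σ^[n] y) := by
  induction n with
  | zero => simp [esum]
  | succ n ih =>
    have hstep := hcoc (σ^[n] y)
    simp only [esum, sum_range_succ, Nat.cast_add, Nat.cast_one, iterate_succ_apply'] at ih ⊢
    linarith

theorem add_comp_invariant_of_cocycles {X Y : Type*} {σ : X → X} {τ : Y → Y} {h : X → Y}
    {k₁ l₁ b₁ : X → ℕ} {k₂ l₂ b₂ : Y → ℕ}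
    (horb₁ : ∀ x, τ^[k₁ x] (h (σ x)) = τ^[l₁ x] (h x))
    (hcoc₁ : ∀ x, (l₁ x : ℤ) - k₁ x = 1 + b₁ x - b₁ (σ x))
    (hcoc₂ : ∀ y, (l₂ y : ℤ) - k₂ y = 1 + b₂ y - b₂ (τ y))
    (hklp : ∀ x, esum τ k₂ (l₁ x) (h x) + esum τ l₂ (k₁ x) (h (σ x)) + 1
        = esum τ k₂ (k₁ x) (h (σ x)) + esum τ l₂ (l₁ x) (h x)) (x : X) :
    b₁ (σ x) + b₂ (h (σ x)) = b₁ x + b₂ (h x) := by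
  have hx := esum_sub_esum_of_cocycle hcoc₂ (l₁ x) (h x)
  have hσx := esum_sub_esum_of_cocycle hcoc₂ (k₁ x) (h (σ x))
  rw [horb₁ x] at hσx
  have hklp' : ((esum τ k₂ (l₁ x) (h x) + esum τ l₂ (k₁ x) (h (σ x)) + 1 : ℕ) : ℤ)
      = (esum τ k₂ (k₁ x) (h (σ x)) + esum τ l₂ (l₁ x) (h x) : ℕ) :=
    congrArg _ (hklp x)
  push_cast at hklp'
  linarith [hcoc₁ x]

theorem b1_add_b2_constant_general {N M : ℕ}
    (A : Matrix (Fin N) (Fin N) (Fin 2)) (B : Matrix (Fin M) (Fin M) (Fin 2))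
    (h : MarkovShift A ≃ₜ MarkovShift B)
    (k1 l1 b1 : MarkovShift A → ℕ) (k2 l2 b2 : MarkovShift B → ℕ)
    (hb1 : Continuous b1)
    (hb2 : Continuous b2)
    (horb1 : ∀ x, (mshift B)^[k1 x] (h (mshift A x)) = (mshift B)^[l1 x] (h x))
    (hcoc1 : ∀ x, (l1 x : ℤ) - (k1 x : ℤ) = 1 + (b1 x : ℤ) - (b1 (mshift A x) : ℤ))
    (hcoc2 : ∀ y, (l2 y : ℤ) - (k2 y : ℤ) = 1 + (b2 y : ℤ) - (b2 (mshift B y) : ℤ))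
    -- Lemma 3.3 of Matsumoto–Matui (which may be assumed):
    (hklp : ∀ x : MarkovShift A,
      esum (mshift B) k2 (l1 x) (h x) + esum (mshift B) l2 (k1 x) (h (mshift A x)) + 1
        = esum (mshift B) k2 (k1 x) (h (mshift A x)) + esum (mshift B) l2 (l1 x) (h x))
    -- topological transitivity: continuous shift-invariant integer functions are constant
    (htrans : ∀ F : MarkovShift A → ℤ, Continuous F →
      (∀ x, F (mshift A x) = F x) → ∃ c : ℤ, ∀ x, F x = c) :
    ∃ Nh : ℕ, ∀ x : MarkovShift A, b1 x + b2 (h x) = Nh := by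
  have hcont : Continuous fun x => ((b1 x + b2 (h x) : ℕ) : ℤ) :=
    continuous_of_discreteTopology.comp (hb1.add (hb2.comp h.continuous))
  obtain ⟨c, hc⟩ := htrans _ hcont fun x =>
    congrArg _ (add_comp_invariant_of_cocycles horb1 hcoc1 hcoc2 hklp x)
  exact ⟨c.toNat, fun x => by have := hc x; omega⟩

/-- for a strongly continuous orbit equivalence, `b_1(x) + b_2(h(x))` is
a constant `N_h`. -/
theorem b1_add_b2_constant {N M : ℕ}
    (A : Matrix (Fin N) (Fin N) (Fin 2)) (B : Matrix (Fin M) (Fin M) (Fin 2))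
    (h : MarkovShift A ≃ₜ MarkovShift B)
    (k1 l1 b1 : MarkovShift A → ℕ) (k2 l2 b2 : MarkovShift B → ℕ)
    (hk1 : Continuous k1) (hl1 : Continuous l1) (hb1 : Continuous b1)
    (hk2 : Continuous k2) (hl2 : Continuous l2) (hb2 : Continuous b2)
    (horb1 : ∀ x, (mshift B)^[k1 x] (h (mshift A x)) = (mshift B)^[l1 x] (h x))
    (horb2 : ∀ y, (mshift A)^[k2 y] (h.symm (mshift B y)) = (mshift A)^[l2 y] (h.symm y))
    (hcoc1 : ∀ x, (l1 x : ℤ) - (k1 x : ℤ) = 1 + (b1 x : ℤ) - (b1 (mshift A x) : ℤ))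
    (hcoc2 : ∀ y, (l2 y : ℤ) - (k2 y : ℤ) = 1 + (b2 y : ℤ) - (b2 (mshift B y) : ℤ))
    -- Lemma 3.3 of Matsumoto–Matui (which may be assumed):
    (hklp : ∀ x : MarkovShift A,
      esum (mshift B) k2 (l1 x) (h x) + esum (mshift B) l2 (k1 x) (h (mshift A x)) + 1
        = esum (mshift B) k2 (k1 x) (h (mshift A x)) + esum (mshift B) l2 (l1 x) (h x))
    -- topological transitivity: continuous shift-invariant integer functions are constant
    (htrans : ∀ F : MarkovShift A → ℤ, Continuous F →
      (∀ x, F (mshift A x) = F x) → ∃ c : ℤ, ∀ x, F x = c) :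
    ∃ Nh : ℕ, ∀ x : MarkovShift A, b1 x + b2 (h x) = Nh :=
  b1_add_b2_constant_general A B h k1 l1 b1 k2 l2 b2 hb1 hb2 horb1 hcoc1 hcoc2 hklp htrans
end

section
/- Under strongly continuous orbit equivalence data $h, b_1, b_2$ with $\varphi_{b_1}(x) = \sigma_B^{b_1(x)}(h(x))$ and $\psi_{b_2}(y) = \sigma_A^{b_2(y)}(h^{-1}(y))$, and with $b_1(x) + b_2(h(x)) = N_h$ constant, one has $\psi_{b_2}(\varphi_{b_1}(x)) = \sigma_A^{N_h}(x)$ for all $x \in X_A$ and $\varphi_{b_1}(\psi_{b_2}(y)) = \sigma_B^{N_h}(y)$ for all $y \in X_B$. In particular each one-sided shift is a factor of the other. -/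
open Function Finset

/-!
Write `φ = σ_B^{b₁} ∘ h` and `ψ = σ_A^{b₂} ∘ h⁻¹` (both are `cocycleShift`s). The hypotheses on
`b₁`, `b₂` say exactly that `φ` intertwines `σ_A` with `σ_B` and `ψ` intertwines `σ_B` with `σ_A`.
Hence `ψ (σ_B^{b₁ x} (h x)) = σ_A^{b₁ x} (ψ (h x)) = σ_A^{b₁ x} (σ_A^{b₂ (h x)} x) = σ_A^{N_h} x`,
and symmetrically with the roles of `A` and `B` exchanged.
-/

section CocycleShift

variable {X Y : Type*}

def cocycleShift (τ : Y → Y) (f : X → Y) (b : X → ℕ) (x : X) : Y :=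
  τ^[b x] (f x)

theorem cocycleShift_cocycleShift_eq_iterate {e : X ≃ Y} {σ : X → X} {τ : Y → Y}
    {b₁ : X → ℕ} {b₂ : Y → ℕ} {N : ℕ} (hψ : Semiconj (cocycleShift σ e.symm b₂) τ σ)
    (hN : ∀ x, b₁ x + b₂ (e x) = N) (x : X) :
    cocycleShift σ e.symm b₂ (cocycleShift τ e b₁ x) = σ^[N] x :=
  calc _ = σ^[b₁ x] (cocycleShift σ e.symm b₂ (e x)) := hψ.iterate_right (b₁ x) (e x)
    _ = σ^[N] x := by
      rw [cocycleShift, e.symm_apply_apply, ← iterate_add_apply, hN]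

end CocycleShift

theorem psi_phi_eq_power_general {N M : ℕ}
    (A : Matrix (Fin N) (Fin N) (Fin 2)) (B : Matrix (Fin M) (Fin M) (Fin 2))
    (h : MarkovShift A ≃ₜ MarkovShift B)
    (b1 : MarkovShift A → ℕ) (b2 : MarkovShift B → ℕ)
    (Nh : ℕ)
    (hphi : ∀ x : MarkovShift A,
      (mshift B)^[b1 (mshift A x)] (h (mshift A x))
        = mshift B ((mshift B)^[b1 x] (h x)))
    (hpsi : ∀ y : MarkovShift B,
      (mshift A)^[b2 (mshift B y)] (h.symm (mshift B y))
        = mshift A ((mshift A)^[b2 y] (h.symm y)))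
    (hNh : ∀ x : MarkovShift A, b1 x + b2 (h x) = Nh) :
    (∀ x : MarkovShift A,
      (mshift A)^[b2 ((mshift B)^[b1 x] (h x))] (h.symm ((mshift B)^[b1 x] (h x)))
        = (mshift A)^[Nh] x) ∧
    (∀ y : MarkovShift B,
      (mshift B)^[b1 ((mshift A)^[b2 y] (h.symm y))] (h ((mshift A)^[b2 y] (h.symm y)))
        = (mshift B)^[Nh] y) := by
  have hNh' : ∀ y, b2 y + b1 (h.symm y) = Nh := fun y => by
    simpa only [h.apply_symm_apply, add_comm] using hNh (h.symm y)
  exact ⟨cocycleShift_cocycleShift_eq_iterate (e := h.toEquiv) hpsi hNh,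
    cocycleShift_cocycleShift_eq_iterate (e := h.symm.toEquiv) hphi hNh'⟩

/-- with `φ_{b_1}(x) = σ_B^{b_1(x)}(h x)`, `ψ_{b_2}(y) = σ_A^{b_2(y)}(h⁻¹ y)`
and `b_1(x) + b_2(h(x)) = N_h` constant, one has `ψ_{b_2} ∘ φ_{b_1} = σ_A^{N_h}` and
`φ_{b_1} ∘ ψ_{b_2} = σ_B^{N_h}`; in particular each one-sided shift is a factor of the
other. -/
theorem psi_phi_eq_power {N M : ℕ}
    (A : Matrix (Fin N) (Fin N) (Fin 2)) (B : Matrix (Fin M) (Fin M) (Fin 2))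
    (h : MarkovShift A ≃ₜ MarkovShift B)
    (b1 : MarkovShift A → ℕ) (b2 : MarkovShift B → ℕ)
    (hb1 : Continuous b1) (hb2 : Continuous b2)
    (Nh : ℕ)
    (hphi : ∀ x : MarkovShift A,
      (mshift B)^[b1 (mshift A x)] (h (mshift A x))
        = mshift B ((mshift B)^[b1 x] (h x)))
    (hpsi : ∀ y : MarkovShift B,
      (mshift A)^[b2 (mshift B y)] (h.symm (mshift B y))
        = mshift A ((mshift A)^[b2 y] (h.symm y)))
    (hNh : ∀ x : MarkovShift A, b1 x + b2 (h x) = Nh) :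
    (∀ x : MarkovShift A,
      (mshift A)^[b2 ((mshift B)^[b1 x] (h x))] (h.symm ((mshift B)^[b1 x] (h x)))
        = (mshift A)^[Nh] x) ∧
    (∀ y : MarkovShift B,
      (mshift B)^[b1 ((mshift A)^[b2 y] (h.symm y))] (h ((mshift A)^[b2 y] (h.symm y)))
        = (mshift B)^[Nh] y) :=
  psi_phi_eq_power_general A B h b1 b2 Nh hphi hpsi hNh
end

section
/- Let $h: X_A \to X_B$ be a homeomorphism such that there exist a two-sided topological conjugacy $\bar{h}: (\bar{X}_A,\bar{\sigma}_A) \to (\bar{X}_B,\bar{\sigma}_B)$ and a continuous function $f_1: X_A \to \mathbb{Z}_{\geq 0}$ with $\pi_B(\bar{h}(\bar{x})) = \sigma_B^{f_1(\pi_A(\bar{x}))}(h(\pi_A(\bar{x})))$ for all $\bar{x} \in \bar{X}_A$, where $\pi_A, \pi_B$ are the restrictions to nonnegative coordinates. Then $\sigma_B^{f_1(x)+1}(h(x)) = \sigma_B^{f_1(\sigma_A(x))}(h(\sigma_A(x)))$ for all $x \in X_A$; in particular $h$ is a continuous orbit map with $k_1 = f_1\circ\sigma_A$, $l_1 = f_1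 + 1$, whose cocycle $l_1 - k_1 = 1 + f_1 - f_1\circ\sigma_A$ is cohomologous to the constant 1 (so $h$ is a strongly continuous orbit map). -/
open Function Finset

/-- The two-sided topological Markov shift space. -/
abbrev MarkovShift2 {N : ℕ} (A : Matrix (Fin N) (Fin N) (Fin 2)) :=
  {x : ℤ → Fin N // ∀ n : ℤ, A (x n) (x (n + 1)) = 1}

/-- The two-sided shift map. -/
def mshift2 {N : ℕ} (A : Matrix (Fin N) (Fin N) (Fin 2)) :
    MarkovShift2 A → MarkovShift2 A :=
  fun x => ⟨fun n => x.1 (n + 1), fun n => x.2 (n + 1)⟩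

/-- The projection `π_A` onto the nonnegative coordinates. -/
def projPos {N : ℕ} (A : Matrix (Fin N) (Fin N) (Fin 2)) :
    MarkovShift2 A → MarkovShift A :=
  fun x => ⟨fun n => x.1 (n : ℤ), fun n => by
    have := x.2 (n : ℤ)
    rwa [show ((n : ℤ) + 1) = (((n + 1 : ℕ)) : ℤ) by push_cast; ring] at this⟩

theorem projPos_mshift2 {K : ℕ} (C : Matrix (Fin K) (Fin K) (Fin 2)) :
    Semiconj (projPos C) (mshift2 C) (mshift C) := by
  intro y
  refine Subtype.ext (funext fun n => ?_)
  change y.1 ((n : ℤ) + 1) = y.1 ((n + 1 : ℕ) : ℤ)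
  push_cast
  rfl

/-- With `x = πX x'`, evaluating `hcompat` at `σX' x'` gives
`σY^[f (σX x)] (h (σX x)) = πY (σY' (hbar x')) = σY (σY^[f x] (h x))`. -/
theorem iterate_succ_eq_of_semiconj {X X' Y Y' : Type*} {σX : X → X} {σX' : X' → X'}
    {σY : Y → Y} {σY' : Y' → Y'} {πX : X' → X} {πY : Y' → Y} {hbar : X' → Y'} {h : X → Y}
    {f : X → ℕ} (hπX : Semiconj πX σX' σX) (hπY : Semiconj πY σY' σY)
    (hconj : Semiconj hbar σX' σY')
    (hcompat : ∀ x', πY (hbar x') = σY^[f (πX x')] (h (πX x'))) (x' : X') :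
    σY^[f (πX x') + 1] (h (πX x')) = σY^[f (σX (πX x'))] (h (σX (πX x'))) := by
  have key := hcompat (σX' x')
  rw [hconj, hπX, hπY, hcompat x'] at key
  rw [← key, iterate_succ_apply']

theorem conjugacy_gives_strong_orbit_map_general {N M : ℕ}
    (A : Matrix (Fin N) (Fin N) (Fin 2)) (B : Matrix (Fin M) (Fin M) (Fin 2))
    (h : MarkovShift A ≃ₜ MarkovShift B)
    (hbar : MarkovShift2 A ≃ₜ MarkovShift2 B)
    (hconj : ∀ x : MarkovShift2 A, hbar (mshift2 A x) = mshift2 B (hbar x))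
    (f1 : MarkovShift A → ℕ)
    (hsurj : Function.Surjective (projPos A))
    (hcompat : ∀ xbar : MarkovShift2 A,
      projPos B (hbar xbar)
        = (mshift B)^[f1 (projPos A xbar)] (h (projPos A xbar))) :
    ∀ x : MarkovShift A,
      (mshift B)^[f1 x + 1] (h x) = (mshift B)^[f1 (mshift A x)] (h (mshift A x)) := by
  intro x
  obtain ⟨xbar, rfl⟩ := hsurj x
  exact iterate_succ_eq_of_semiconj (projPos_mshift2 A) (projPos_mshift2 B) hconj hcompat xbar

/-- a homeomorphism `h` compatible with a two-sided conjugacy via a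
continuous function `f_1` satisfies `σ_B^{f_1(x)+1}(h x) = σ_B^{f_1(σ_A x)}(h(σ_A x))`;
in particular `h` is a (strongly) continuous orbit map with `k_1 = f_1∘σ_A`,
`l_1 = f_1 + 1`. -/
theorem conjugacy_gives_strong_orbit_map {N M : ℕ}
    (A : Matrix (Fin N) (Fin N) (Fin 2)) (B : Matrix (Fin M) (Fin M) (Fin 2))
    (h : MarkovShift A ≃ₜ MarkovShift B)
    (hbar : MarkovShift2 A ≃ₜ MarkovShift2 B)
    (hconj : ∀ x : MarkovShift2 A, hbar (mshift2 A x) = mshift2 B (hbar x))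
    (f1 : MarkovShift A → ℕ) (hf1 : Continuous f1)
    (hsurj : Function.Surjective (projPos A))
    (hcompat : ∀ xbar : MarkovShift2 A,
      projPos B (hbar xbar)
        = (mshift B)^[f1 (projPos A xbar)] (h (projPos A xbar))) :
    ∀ x : MarkovShift A,
      (mshift B)^[f1 x + 1] (h x) = (mshift B)^[f1 (mshift A x)] (h (mshift A x)) :=
  conjugacy_gives_strong_orbit_map_general A B h hbar hconj f1 hsurj hcompat
end
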